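/- Let p, q be coprime positive integers and n ≥ 2, and A as above. Then the minimum positive integer l such that l·e_i ∈ A·ℤ^n is l = p^n + q^n, for every i ∈ [1,n]. -/
import Mathlib

/-- The matrix `A` with `q` on the diagonal, `-p` on the subdiagonal,
`p` in the top-right corner (entry `(1,n)`), and `0` elsewhere. -/
def tilingMatrix (p q : ℝ) (n : ℕ) : Matrix (Fin n) (Fin n) ℝ :=
  Matrix.of fun i j =>
    if (i : ℕ) = (j : ℕ) then q
    else if (i : ℕ) = (j : ℕ) + 1 then -p
    else if (i : ℕ) = 0 ∧ (j : ℕ) = n - 1 then p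
    else 0

/-- The lattice `A·ℤⁿ` of integer linear combinations of the columns of `A`. -/
def latticeA (p q : ℝ) (n : ℕ) : Set (Fin n → ℝ) :=
  {x | ∃ z : Fin n → ℤ, x = (tilingMatrix p q n).mulVec fun i => (z i : ℝ)}

lemma tiling_row (p q : ℝ) {n : ℕ} (hn : 2 ≤ n) (v : Fin n → ℝ) (k : Fin n) :
    (tilingMatrix p q n).mulVec v k =
      if (k : ℕ) = 0 then q * v k + p * v ⟨n-1, by omega⟩
      else q * v k - p * v ⟨(k:ℕ)-1, by omega⟩ := by
  have hn0 : 0 < n := by omega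
  rw [Matrix.mulVec]
  by_cases h0 : (k : ℕ) = 0
  · simp only [if_pos h0]
    have key : ∀ j : Fin n, tilingMatrix p q n k j * v j =
        (if j = k then q * v k else 0) + (if j = (⟨n-1, by omega⟩ : Fin n) then p * v ⟨n-1, by omega⟩ else 0) := by
      intro j
      simp only [tilingMatrix, Matrix.of_apply, Fin.ext_iff]
      split_ifs
      any_goals (exfalso; omega)
      all_goals try rw [show v j = v k from congrArg v (Fin.ext (by omega))]
      all_goals try rw [show v j = v (⟨n-1, Nat.sub_lt hn0 Nat.one_pos⟩ : Fin n) from congrArg v (Fin.ext (show (j:ℕ) = n-1 by omega))]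
      all_goals first | rfl | ring
    simp only [dotProduct, key, Finset.sum_add_distrib, Finset.sum_ite_eq' Finset.univ,
      Finset.mem_univ, if_true]
  · simp only [if_neg h0]
    have hk1 : (k:ℕ) - 1 < n := by omega
    have key : ∀ j : Fin n, tilingMatrix p q n k j * v j =
        (if j = k then q * v k else 0) + (if j = (⟨(k:ℕ)-1, by omega⟩ : Fin n) then -(p * v ⟨(k:ℕ)-1, by omega⟩) else 0) := by
      intro j
      simp only [tilingMatrix, Matrix.of_apply, Fin.ext_iff]
      split_ifs
      any_goals (exfalso; omega)
      all_goals try rw [show v j = v k from congrArg v (Fin.ext (by omega))]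
      all_goals try rw [show v j = v (⟨(k:ℕ)-1, hk1⟩ : Fin n) from congrArg v (Fin.ext (show (j:ℕ) = (k:ℕ)-1 by omega))]
      all_goals first | rfl | ring
    simp only [dotProduct, key, Finset.sum_add_distrib, Finset.sum_ite_eq' Finset.univ,
      Finset.mem_univ, if_true]
    ring

lemma tiling_inj (p q : ℝ) (hp : 0 < p) (hq : 0 < q) {n : ℕ} (hn : 2 ≤ n) (x : Fin n → ℝ)
    (hx : (tilingMatrix p q n).mulVec x = 0) : x = 0 := by
  have hn0 : 0 < n := by omega
  have row : ∀ k : Fin n, (tilingMatrix p q n).mulVec x k = 0 := fun k => congrFun hx k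
  have rowk : ∀ (m : ℕ) (h : m + 1 < n), q * x ⟨m+1, h⟩ - p * x ⟨m, by omega⟩ = 0 := by
    intro m h
    have := row ⟨m+1, h⟩
    rw [tiling_row _ _ hn, if_neg (by simp)] at this
    exact this
  have row0 : q * x ⟨0, hn0⟩ + p * x ⟨n-1, by omega⟩ = 0 := by
    have := row ⟨0, hn0⟩
    rw [tiling_row _ _ hn, if_pos (by simp)] at this
    exact this
  have key : ∀ (m : ℕ) (h : m < n), q^m * x ⟨m, h⟩ = p^m * x ⟨0, hn0⟩ := by
    intro m
    induction m with
    | zero => intro h; simp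
    | succ m ih =>
      intro h
      have hm : m < n := by omega
      have rk := rowk m h
      have ihm := ih hm
      linear_combination q^m * rk + p * ihm
  have x0 : x ⟨0, hn0⟩ = 0 := by
    have hk := key (n-1) (by omega)
    have hpos : (0:ℝ) < q^n + p^n := by positivity
    have hnn : n - 1 + 1 = n := by omega
    have hq2 : q^(n-1) * q = q^n := by rw [← pow_succ, hnn]
    have hp2 : p * p^(n-1) = p^n := by rw [← pow_succ', hnn]
    have : (q^n + p^n) * x ⟨0, hn0⟩ = 0 := by
      linear_combination q^(n-1) * row0 - p * hk - (x ⟨0, hn0⟩) * hq2 - (x ⟨0, hn0⟩) * hp2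
    have := mul_eq_zero.mp this
    rcases this with h | h
    · linarith
    · exact h
  funext k
  have hk := key k (k.isLt)
  rw [Fin.eta, x0, mul_zero] at hk
  have hq0 : (q:ℝ)^(k:ℕ) ≠ 0 := by positivity
  have := mul_eq_zero.mp hk
  rcases this with h | h
  · exact absurd h hq0
  · exact h

def wvec (p q n : ℕ) (i : Fin n) : Fin n → ℤ := fun k =>
  if (i:ℕ) ≤ (k:ℕ) then (p:ℤ)^((k:ℕ)-(i:ℕ)) * (q:ℤ)^(n-1-((k:ℕ)-(i:ℕ)))
  else -((p:ℤ)^(n-((i:ℕ)-(k:ℕ))) * (q:ℤ)^((i:ℕ)-(k:ℕ)-1))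

lemma wvec_row (p q : ℕ) {n : ℕ} (hn : 2 ≤ n) (i k : Fin n) :
    (tilingMatrix p q n).mulVec (fun j => ((wvec p q n i j : ℤ) : ℝ)) k
      = if k = i then ((p:ℝ)^n + (q:ℝ)^n) else 0 := by
  have hn0 : 0 < n := by omega
  have hilt : (i:ℕ) < n := i.isLt
  have hklt : (k:ℕ) < n := k.isLt
  rw [tiling_row _ _ hn]
  by_cases h0 : (k:ℕ) = 0
  · rw [if_pos h0]
    simp only [wvec]
    by_cases hi : (i:ℕ) = 0
    · rw [if_pos (show k = i from Fin.ext (by omega))]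
      rw [if_pos (show (i:ℕ) ≤ (k:ℕ) by omega),
          if_pos (show (i:ℕ) ≤ ((⟨n-1, by omega⟩ : Fin n):ℕ) by simp; omega)]
      push_cast
      rw [show (k:ℕ) - (i:ℕ) = 0 by omega,
          show n - 1 - 0 = n - 1 by omega,
          show n - 1 - (i:ℕ) = n - 1 by omega,
          show n - 1 - (n - 1) = 0 by omega]
      have hnn : n - 1 + 1 = n := by omega
      rw [show ((p:ℝ))^n = (p:ℝ)^(n-1) * (p:ℝ) by rw [← pow_succ, hnn],
          show ((q:ℝ))^n = (q:ℝ)^(n-1) * (q:ℝ) by rw [← pow_succ, hnn]]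
      ring
    · rw [if_neg (show ¬ k = i by intro h; rw [Fin.ext_iff] at h; omega)]
      rw [if_neg (show ¬ (i:ℕ) ≤ (k:ℕ) by omega),
          if_pos (show (i:ℕ) ≤ ((⟨n-1, by omega⟩ : Fin n):ℕ) by simp; omega)]
      push_cast
      obtain ⟨a, ha⟩ : ∃ a, (i:ℕ) = a + 1 := ⟨(i:ℕ)-1, by omega⟩
      obtain ⟨c, hc⟩ : ∃ c, n = (i:ℕ) + c + 1 := ⟨n - (i:ℕ) - 1, by omega⟩
      rw [show (i:ℕ) - (k:ℕ) = a + 1 by omega,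
          show n - (a+1) = c + 1 by omega,
          show a + 1 - 1 = a by omega,
          show n - 1 - (i:ℕ) = c by omega,
          show n - 1 - c = a + 1 by omega]
      ring
  · rw [if_neg h0]
    simp only [wvec]
    rcases lt_trichotomy (i:ℕ) (k:ℕ) with hik | hik | hik
    · rw [if_neg (show ¬ k = i by intro h; rw [Fin.ext_iff] at h; omega)]
      rw [if_pos (show (i:ℕ) ≤ (k:ℕ) by omega),
          if_pos (show (i:ℕ) ≤ ((⟨(k:ℕ)-1, by omega⟩ : Fin n):ℕ) by simp; omega)]
      push_cast
      obtain ⟨a, ha⟩ : ∃ a, (k:ℕ) - (i:ℕ) = a + 1 := ⟨(k:ℕ)-(i:ℕ)-1, by omega⟩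
      obtain ⟨c, hc⟩ : ∃ c, n - 1 - ((k:ℕ) - (i:ℕ)) = c := ⟨_, rfl⟩
      rw [ha,
          show (k:ℕ) - 1 - (i:ℕ) = a by omega,
          show n - 1 - (a + 1) = c by omega,
          show n - 1 - a = c + 1 by omega]
      ring
    · rw [if_pos (show k = i from Fin.ext (by omega))]
      rw [if_pos (show (i:ℕ) ≤ (k:ℕ) by omega),
          if_neg (show ¬ (i:ℕ) ≤ ((⟨(k:ℕ)-1, by omega⟩ : Fin n):ℕ) by simp; omega)]
      push_cast
      rw [show (k:ℕ) - (i:ℕ) = 0 by omega,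
          show n - 1 - 0 = n - 1 by omega,
          show (i:ℕ) - ((k:ℕ) - 1) = 1 by omega,
          show (1:ℕ) - 1 = 0 from rfl]
      have hnn : n - 1 + 1 = n := by omega
      rw [show ((p:ℝ))^n = (p:ℝ)^(n-1) * (p:ℝ) by rw [← pow_succ, hnn],
          show ((q:ℝ))^n = (q:ℝ)^(n-1) * (q:ℝ) by rw [← pow_succ, hnn]]
      ring
    · rw [if_neg (show ¬ k = i by intro h; rw [Fin.ext_iff] at h; omega)]
      rw [if_neg (show ¬ (i:ℕ) ≤ (k:ℕ) by omega),
          if_neg (show ¬ (i:ℕ) ≤ ((⟨(k:ℕ)-1, by omega⟩ : Fin n):ℕ) by simp; omega)]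
      push_cast
      obtain ⟨a, ha⟩ : ∃ a, (i:ℕ) - (k:ℕ) = a + 1 := ⟨(i:ℕ)-(k:ℕ)-1, by omega⟩
      obtain ⟨c, hc⟩ : ∃ c, n - ((i:ℕ) - (k:ℕ)) = c + 1 := ⟨n - ((i:ℕ)-(k:ℕ)) - 1, by omega⟩
      rw [ha,
          show (i:ℕ) - ((k:ℕ) - 1) = a + 2 by omega,
          show n - (a+1) = c + 1 by omega,
          show a + 1 - 1 = a by omega,
          show n - (a+2) = c by omega,
          show a + 2 - 1 = a + 1 by omega]
      ring

/-- For coprime positive integers `p, q`, the least positive integer `l` with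
`l·e_i ∈ A·ℤⁿ` is `p^n + q^n`, for every `i`. -/
theorem minimal_period (p q : ℕ) (hp : 0 < p) (hq : 0 < q) (hco : Nat.Coprime p q)
    (n : ℕ) (hn : 2 ≤ n) (i : Fin n) :
    IsLeast {l : ℕ | 0 < l ∧
      ((l : ℝ) • (Pi.single i 1 : Fin n → ℝ)) ∈ latticeA (p : ℝ) (q : ℝ) n}
      (p ^ n + q ^ n) := by
  have hp' : (0:ℝ) < p := by exact_mod_cast hp
  have hq' : (0:ℝ) < q := by exact_mod_cast hq
  constructor
  · refine ⟨by positivity, ?_⟩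
    refine ⟨wvec p q n i, ?_⟩
    funext k
    rw [wvec_row p q hn i k]
    simp only [Pi.smul_apply, Pi.single_apply, smul_eq_mul]
    by_cases h : k = i
    · rw [if_pos h, if_pos h]; push_cast; ring
    · rw [if_neg h, if_neg h]; ring
  · rintro l ⟨hl, z, hz⟩
    set D := p^n + q^n with hD
    -- the difference vector is killed by the matrix
    have hker : (tilingMatrix p q n).mulVec
        (fun j => (l:ℝ) * (wvec p q n i j : ℝ) - (D:ℝ) * (z j : ℝ)) = 0 := by
      funext k
      rw [Pi.zero_apply]
      have h1 : (tilingMatrix p q n).mulVec (fun j => (l:ℝ) * (wvec p q n i j : ℝ) - (D:ℝ) * (z j : ℝ)) k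
          = (l:ℝ) * (tilingMatrix p q n).mulVec (fun j => ((wvec p q n i j : ℤ):ℝ)) k
            - (D:ℝ) * (tilingMatrix p q n).mulVec (fun j => ((z j : ℤ):ℝ)) k := by
        simp only [Matrix.mulVec, dotProduct, Finset.mul_sum, ← Finset.sum_sub_distrib]
        congr 1; funext j; ring
      rw [h1, wvec_row p q hn i k]
      have hz' := congrFun hz k
      simp only [Pi.smul_apply, Pi.single_apply, smul_eq_mul] at hz'
      rw [← hz']
      by_cases h : k = i
      · rw [if_pos h, if_pos h]; push_cast [hD]; ring
      · rw [if_neg h, if_neg h]; ring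
    have hzero := tiling_inj (p:ℝ) (q:ℝ) hp' hq' hn _ hker
    have heq : (l:ℝ) * ((wvec p q n i i : ℤ) : ℝ) = (D:ℝ) * ((z i : ℤ) : ℝ) := by
      have := congrFun hzero i
      simpa [sub_eq_zero] using this
    have hwi : wvec p q n i i = (q:ℤ)^(n-1) := by
      simp [wvec]
    have hInt : (l:ℤ) * (q:ℤ)^(n-1) = (D:ℤ) * z i := by
      rw [hwi] at heq; exact_mod_cast heq
    have hdvd : D ∣ l * q^(n-1) := by
      have : (D:ℤ) ∣ ((l * q^(n-1) : ℕ) : ℤ) := ⟨z i, by push_cast; exact hInt⟩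
      exact_mod_cast this
    have hcop : Nat.Coprime D (q^(n-1)) := by
      have h1 : Nat.Coprime (p^n) q := Nat.Coprime.pow_left _ hco
      have h2 : Nat.Coprime (p^n + q^(n-1) * q) q :=
        (Nat.coprime_add_mul_right_left (p^n) q (q^(n-1))).mpr h1
      have h3 : q^(n-1) * q = q^n := by rw [← pow_succ]; congr 1; omega
      rw [h3] at h2
      exact h2.pow_right _
    exact Nat.le_of_dvd hl (hcop.dvd_of_dvd_mul_right hdvd)
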